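/- Fix i ≥ 0 and regard the sum bit s_i of an adder with incoming carry as the Boolean function of the 2i+3 variables c₋₁, a_0, b_0, a_1, b_1, …, a_i, b_i defined by s_i = a_i ⊕ b_i ⊕ c_{i-1}, where the carry bits satisfy c_l = (a_l ∧ b_l) ∨ (a_l ∧ c_{l-1}) ∨ (b_l ∧ c_{l-1}) for 0 ≤ l < i. Under the interleaved variable order c₋₁, a_0, b_0, a_1, b_1, …, a_i, b_i, the number of distinct non-constant prefix restrictions of s_i is at most 3·i + 7. -/

import Mathlib

/-- The prefix restriction of a Boolean function `f : (Fin n → Bool) → Bool`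
obtained by fixing the first `k` variables (w.r.t. the order `x_0, …, x_{n-1}`)
to the constants given by `ρ`, regarded again as a function
`(Fin n → Bool) → Bool` that ignores the fixed coordinates. -/
def prefixRestrict {n : ℕ} (f : (Fin n → Bool) → Bool) (k : ℕ) (ρ : Fin n → Bool) :
    (Fin n → Bool) → Bool :=
  fun x => f fun j => if (j : ℕ) < k then ρ j else x j

/-- The number of distinct non-constant prefix restrictions of
`f : (Fin n → Bool) → Bool` under the variable order `x_0, …, x_{n-1}`.
This equals the number of internal nodes of the reduced ordered BDD of `f`
under this variable order, and is taken as the definition of the BDD size. -/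
noncomputable def bddSize {n : ℕ} (f : (Fin n → Bool) → Bool) : ℕ :=
  Set.ncard {g : (Fin n → Bool) → Bool |
    (∃ k ≤ n, ∃ ρ : Fin n → Bool, g = prefixRestrict f k ρ) ∧ ¬∃ c, ∀ x, g x = c}

/-- The carry chain of an adder on the `2i+3` variables
`x 0 = c₋₁, x 1 = a_0, x 2 = b_0, …, x (2i+1) = a_i, x (2i+2) = b_i`:
`adderCarry i x 0 = c₋₁` and `adderCarry i x (l+1) = c_l` where
`c_l = (a_l ∧ b_l) ∨ (a_l ∧ c_{l-1}) ∨ (b_l ∧ c_{l-1})`. -/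
def adderCarry (i : ℕ) (x : Fin (2 * i + 3) → Bool) : ℕ → Bool
  | 0 => x ⟨0, by omega⟩
  | l + 1 =>
      if h : l ≤ i then
        (x ⟨2 * l + 1, by omega⟩ && x ⟨2 * l + 2, by omega⟩) ||
          (x ⟨2 * l + 1, by omega⟩ && adderCarry i x l) ||
          (x ⟨2 * l + 2, by omega⟩ && adderCarry i x l)
      else false

/-- The sum bit `s_i = a_i ⊕ b_i ⊕ c_{i-1}` of an adder with incoming carry,
regarded as a Boolean function of the `2i+3` variables
`c₋₁, a_0, b_0, a_1, b_1, …, a_i, b_i` (in this interleaved order). -/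
def sumBit (i : ℕ) (x : Fin (2 * i + 3) → Bool) : Bool :=
  xor (x ⟨2 * i + 1, by omega⟩) (xor (x ⟨2 * i + 2, by omega⟩) (adderCarry i x i))

/-!
Fix the inputs `c₋₁, a_0, b_0, …, a_{m-1}, b_{m-1}`. What is left of `s_i` depends on them only
through the carry `c_{m-1}` into position `m`, so it is one of two functions. Fixing `a_m` as well,
the majority `c_m` of `a_m, b_m, c_{m-1}` equals `a_m` when `a_m = c_{m-1}` and equals the free
variable `b_m` otherwise; so the restriction is again one of those two functions at position
`m + 1`, or the sum bit with the free variable `b_m` as carry into position `m + 1`. With the two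
functions `b_i ⊕ c` left after fixing `a_i`, at most `3 (i + 1) + 2` non-constant prefix
restrictions occur.
-/

open Finset

lemma prefixRestrict_self {n : ℕ} (f : (Fin n → Bool) → Bool) (ρ : Fin n → Bool) :
    prefixRestrict f n ρ = fun _ => f ρ := by
  funext x
  exact congrArg f (funext fun j => if_pos j.isLt)

lemma bddSize_le_card {n : ℕ} {f : (Fin n → Bool) → Bool} (s : Finset ((Fin n → Bool) → Bool))
    (hs : ∀ k ≤ n, ∀ ρ, (¬∃ c, ∀ x, prefixRestrict f k ρ x = c) → prefixRestrict f k ρ ∈ s) :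
    bddSize f ≤ s.card := by
  rw [bddSize, ← Set.ncard_coe_finset]
  refine Set.ncard_le_ncard ?_ s.finite_toSet
  rintro g ⟨⟨k, hk, ρ, rfl⟩, hnc⟩
  exact hs k hk ρ hnc

def inputBit {n : ℕ} (x : Fin n → Bool) (j : ℕ) : Bool :=
  if h : j < n then x ⟨j, h⟩ else false

lemma inputBit_of_lt {n j : ℕ} (x : Fin n → Bool) (h : j < n) : inputBit x j = x ⟨j, h⟩ :=
  dif_pos h

lemma inputBit_prefix {n k : ℕ} (ρ x : Fin n → Bool) (j : ℕ) :
    inputBit (fun j : Fin n => if (j : ℕ) < k then ρ j else x j) j =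
      if j < k then inputBit ρ j else inputBit x j := by
  by_cases hj : j < n <;> by_cases hk : j < k <;> simp [inputBit, hj, hk]

lemma inputBit_prefix_of_lt {n k j : ℕ} (ρ x : Fin n → Bool) (h : j < k) :
    inputBit (fun j : Fin n => if (j : ℕ) < k then ρ j else x j) j = inputBit ρ j := by
  rw [inputBit_prefix, if_pos h]

lemma inputBit_prefix_of_le {n k j : ℕ} (ρ x : Fin n → Bool) (h : k ≤ j) :
    inputBit (fun j : Fin n => if (j : ℕ) < k then ρ j else x j) j = inputBit x j := by
  rw [inputBit_prefix, if_neg h.not_gt]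

def rippleCarry (a b : ℕ → Bool) (c : Bool) : ℕ → Bool
  | 0 => c
  | n + 1 => (a n && b n) || (a n && rippleCarry a b c n) || (b n && rippleCarry a b c n)

lemma rippleCarry_succ_eq_ite (a b : ℕ → Bool) (c : Bool) (n : ℕ) :
    rippleCarry a b c (n + 1) = if a n = rippleCarry a b c n then a n else b n := by
  rw [rippleCarry]
  cases a n <;> cases b n <;> cases rippleCarry a b c n <;> rfl

lemma rippleCarry_add (a b : ℕ → Bool) (c : Bool) (m n : ℕ) :
    rippleCarry a b c (m + n) =
      rippleCarry (fun l => a (m + l)) (fun l => b (m + l)) (rippleCarry a b c m) n := by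
  induction n with
  | zero => rfl
  | succ n ih =>
    show rippleCarry a b c (m + n + 1) = _
    rw [rippleCarry, rippleCarry, ih]

lemma rippleCarry_congr {a b a' b' : ℕ → Bool} (c : Bool) {n : ℕ}
    (ha : ∀ l < n, a l = a' l) (hb : ∀ l < n, b l = b' l) :
    rippleCarry a b c n = rippleCarry a' b' c n := by
  induction n with
  | zero => rfl
  | succ n ih =>
    simp only [rippleCarry, ha n n.lt_succ_self, hb n n.lt_succ_self,
      ih (fun l hl => ha l (by omega)) (fun l hl => hb l (by omega))]

section Adder

variable {n : ℕ}

def addendA (x : Fin n → Bool) (l : ℕ) : Bool := inputBit x (2 * l + 1)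

def addendB (x : Fin n → Bool) (l : ℕ) : Bool := inputBit x (2 * l + 2)

/-- `carryIn x m` is the carry `c_{m-1}` into position `m`. -/
def carryIn (x : Fin n → Bool) : ℕ → Bool :=
  rippleCarry (addendA x) (addendB x) (inputBit x 0)

lemma carryIn_congr {x y : Fin n → Bool} {m : ℕ} (h : ∀ j ≤ 2 * m, inputBit x j = inputBit y j) :
    carryIn x m = carryIn y m := by
  rw [carryIn, carryIn, h 0 (Nat.zero_le _)]
  exact rippleCarry_congr _ (fun l hl => h _ (by omega)) (fun l hl => h _ (by omega))

end Adder

lemma adderCarry_eq_carryIn (i : ℕ) (x : Fin (2 * i + 3) → Bool) {l : ℕ} (hl : l ≤ i + 1) :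
    adderCarry i x l = carryIn x l := by
  induction l with
  | zero => exact (inputBit_of_lt x _).symm
  | succ l ih =>
    have hA : addendA x l = x ⟨2 * l + 1, by omega⟩ := inputBit_of_lt x _
    have hB : addendB x l = x ⟨2 * l + 2, by omega⟩ := inputBit_of_lt x _
    rw [adderCarry, dif_pos (by omega), ih (by omega), carryIn, rippleCarry, hA, hB]

lemma sumBit_eq (i : ℕ) (x : Fin (2 * i + 3) → Bool) :
    sumBit i x = xor (addendA x i) (xor (addendB x i) (carryIn x i)) := by
  rw [sumBit, adderCarry_eq_carryIn i x (Nat.le_succ i), addendA, addendB, inputBit_of_lt,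
    inputBit_of_lt]

/-- The seed `none` of the carry into position `m` stands for the variable `x_{2m}`, which is `c₋₁`
for `m = 0` and `b_{m-1}` otherwise. -/
def sumBitFrom (i m : ℕ) (s : Option Bool) (x : Fin (2 * i + 3) → Bool) : Bool :=
  xor (addendA x i) (xor (addendB x i)
    (rippleCarry (fun l => addendA x (m + l)) (fun l => addendB x (m + l))
      (s.getD (inputBit x (2 * m))) (i - m)))

lemma sumBit_eq_sumBitFrom {i m : ℕ} (hm : m ≤ i) {x y : Fin (2 * i + 3) → Bool}
    (hxy : ∀ j, 2 * m + 1 ≤ j → inputBit y j = inputBit x j) :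
    sumBit i y = sumBitFrom i m (some (carryIn y m)) x := by
  have hA : ∀ l, m ≤ l → addendA y l = addendA x l := fun l hl => hxy _ (by omega)
  have hB : ∀ l, m ≤ l → addendB y l = addendB x l := fun l hl => hxy _ (by omega)
  have hrestart := rippleCarry_add (addendA y) (addendB y) (inputBit y 0) m (i - m)
  rw [Nat.add_sub_cancel' hm] at hrestart
  rw [sumBit_eq, sumBitFrom, Option.getD_some, carryIn, hrestart, hA i hm, hB i hm,
    funext fun l => hA (m + l) (Nat.le_add_right m l),
    funext fun l => hB (m + l) (Nat.le_add_right m l)]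

lemma prefixRestrict_sumBit_zero (i : ℕ) (ρ : Fin (2 * i + 3) → Bool) :
    prefixRestrict (sumBit i) 0 ρ = sumBitFrom i 0 none := by
  funext x
  have hx : (fun j : Fin (2 * i + 3) => if (j : ℕ) < 0 then ρ j else x j) = x :=
    funext fun j => if_neg (Nat.not_lt_zero j)
  rw [prefixRestrict, hx, sumBit_eq_sumBitFrom (Nat.zero_le i) fun j _ => rfl]
  rfl

lemma prefixRestrict_sumBit_odd {i m : ℕ} (hm : m ≤ i) (ρ : Fin (2 * i + 3) → Bool) :
    prefixRestrict (sumBit i) (2 * m + 1) ρ = sumBitFrom i m (some (carryIn ρ m)) := by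
  funext x
  rw [prefixRestrict, sumBit_eq_sumBitFrom hm fun j hj => inputBit_prefix_of_le ρ x hj,
    carryIn_congr fun j hj => inputBit_prefix_of_lt ρ x (by omega)]

lemma prefixRestrict_sumBit_even {i m : ℕ} (hm : m < i) (ρ : Fin (2 * i + 3) → Bool) :
    prefixRestrict (sumBit i) (2 * m + 2) ρ =
      sumBitFrom i (m + 1) (if addendA ρ m = carryIn ρ m then some (addendA ρ m) else none) := by
  funext x
  set y := fun j : Fin (2 * i + 3) => if (j : ℕ) < 2 * m + 2 then ρ j else x j
  have hA : addendA y m = addendA ρ m := inputBit_prefix_of_lt ρ x (by omega)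
  have hB : addendB y m = inputBit x (2 * (m + 1)) := inputBit_prefix_of_le ρ x le_rfl
  have hcarry : carryIn y m = carryIn ρ m :=
    carryIn_congr fun j hj => inputBit_prefix_of_lt ρ x (by omega)
  have hseed : carryIn y (m + 1) =
      if addendA ρ m = carryIn ρ m then addendA ρ m else inputBit x (2 * (m + 1)) := by
    rw [carryIn, rippleCarry_succ_eq_ite, ← carryIn, hA, hB, hcarry]
  rw [prefixRestrict, sumBit_eq_sumBitFrom (m := m + 1) (by omega) fun j hj =>
    inputBit_prefix_of_le ρ x (by omega), hseed]
  split_ifs <;> rfl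

lemma prefixRestrict_sumBit_last (i : ℕ) (ρ : Fin (2 * i + 3) → Bool) :
    prefixRestrict (sumBit i) (2 * i + 2) ρ =
      fun x => xor (inputBit x (2 * i + 2)) (xor (addendA ρ i) (carryIn ρ i)) := by
  funext x
  set y := fun j : Fin (2 * i + 3) => if (j : ℕ) < 2 * i + 2 then ρ j else x j
  have hA : addendA y i = addendA ρ i := inputBit_prefix_of_lt ρ x (by omega)
  have hB : addendB y i = inputBit x (2 * i + 2) := inputBit_prefix_of_le ρ x le_rfl
  have hcarry : carryIn y i = carryIn ρ i :=
    carryIn_congr fun j hj => inputBit_prefix_of_lt ρ x (by omega)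
  rw [prefixRestrict, sumBit_eq, hA, hB, hcarry, Bool.xor_left_comm]

def sumBitRestrictions (i : ℕ) : Finset ((Fin (2 * i + 3) → Bool) → Bool) :=
  (range (i + 1) ×ˢ univ).image (fun p : ℕ × Option Bool => sumBitFrom i p.1 p.2) ∪
    univ.image fun c x => xor (inputBit x (2 * i + 2)) c

lemma card_sumBitRestrictions_le (i : ℕ) : (sumBitRestrictions i).card ≤ 3 * i + 5 := by
  calc (sumBitRestrictions i).card
      ≤ (range (i + 1) ×ˢ (univ : Finset (Option Bool))).card + (univ : Finset Bool).card :=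
        (card_union_le _ _).trans (add_le_add card_image_le card_image_le)
    _ = 3 * i + 5 := by simp [card_product]; ring

lemma sumBitFrom_mem_sumBitRestrictions {i m : ℕ} (hm : m ≤ i) (s : Option Bool) :
    sumBitFrom i m s ∈ sumBitRestrictions i :=
  mem_union_left _ (mem_image.2 ⟨(m, s), mem_product.2 ⟨mem_range.2 (by omega), mem_univ s⟩, rfl⟩)

lemma prefixRestrict_sumBit_mem {i k : ℕ} (hk : k ≤ 2 * i + 3) (ρ : Fin (2 * i + 3) → Bool)
    (hnc : ¬∃ c, ∀ x, prefixRestrict (sumBit i) k ρ x = c) :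
    prefixRestrict (sumBit i) k ρ ∈ sumBitRestrictions i := by
  obtain ⟨m, rfl | rfl⟩ := Nat.even_or_odd' k
  · rcases m with _ | m
    · rw [prefixRestrict_sumBit_zero]
      exact sumBitFrom_mem_sumBitRestrictions (Nat.zero_le i) none
    rw [Nat.mul_succ]
    rcases Nat.lt_or_ge m i with hm | hm
    · rw [prefixRestrict_sumBit_even hm]
      exact sumBitFrom_mem_sumBitRestrictions hm _
    · obtain rfl : m = i := by omega
      rw [prefixRestrict_sumBit_last]
      exact mem_union_right _ (mem_image_of_mem _ (mem_univ _))
  · rcases Nat.lt_or_ge m (i + 1) with hm | hm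
    · rw [prefixRestrict_sumBit_odd (by omega)]
      exact sumBitFrom_mem_sumBitRestrictions (by omega) _
    · obtain rfl : m = i + 1 := by omega
      rw [show 2 * (i + 1) + 1 = 2 * i + 3 by ring, prefixRestrict_self] at hnc
      exact absurd ⟨sumBit i ρ, fun _ => rfl⟩ hnc

/-- **BDD size of the sum bit.** For every `i ≥ 0`, under the interleaved
variable order `c₋₁, a_0, b_0, …, a_i, b_i`, the number of distinct
non-constant prefix restrictions of the sum bit `s_i` (i.e. its BDD size)
is at most `3·i + 7`. -/
theorem sumBit_bddSize_le (i : ℕ) : bddSize (sumBit i) ≤ 3 * i + 7 :=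
  calc bddSize (sumBit i) ≤ (sumBitRestrictions i).card :=
        bddSize_le_card _ fun _ hk ρ hnc => prefixRestrict_sumBit_mem hk ρ hnc
    _ ≤ 3 * i + 7 := by linarith [card_sumBitRestrictions_le i]
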